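/- arXiv:2309.11043 — 3 statements merged into one kernel-verified Lean document; each statement's English description precedes it below -/
import Mathlib

section
/- Let μ be a σ-finite measure on a measurable space X, and let p, q : X → ℝ≥0 be measurable functions with ∫ p dμ = 1 and ∫ q dμ = 1. Then ∫ q²/(p + q) dμ = 1/2 if and only if p = q μ-almost everywhere (with the integrand interpreted as 0 where p + q = 0). -/
open scoped NNReal ENNReal

/-!
Pointwise, `q ≤ q² / (p + q) + (p + q) / 4` by AM-GM, with equality exactly where `p = q`.
Integrating, the right-hand side has integral `∫ q² / (p + q) + 1 / 2` while the left has
integral `1`, so `∫ q² / (p + q) ≥ 1 / 2`, with equality iff the pointwise inequality is an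
equality almost everywhere.
-/

theorem sq_div_add_div_four_sub {K : Type*} [Field K] [CharZero K] (a : K) {b : K} (hb : b ≠ 0) :
    a ^ 2 / b + b / 4 - a = (b - 2 * a) ^ 2 / (4 * b) := by
  field_simp
  ring

namespace ENNReal

theorem coe_sq_div_add_div_four_eq_ofReal (a : ℝ≥0) {b : ℝ≥0} (hb : b ≠ 0) :
    (a : ℝ≥0∞) ^ 2 / b + b / 4 = ENNReal.ofReal ((a : ℝ) ^ 2 / b + b / 4) := by
  rw [ofReal_add (by positivity) (by positivity), ofReal_div_of_pos (by positivity),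
    ofReal_div_of_pos (by positivity)]
  simp

theorem le_sq_div_add_div_four (a b : ℝ≥0∞) : a ≤ a ^ 2 / b + b / 4 := by
  rcases eq_or_ne b 0 with rfl | hb0
  · rcases eq_or_ne a 0 with rfl | ha0
    · simp
    · simp [ENNReal.div_zero (pow_ne_zero 2 ha0)]
  rcases eq_or_ne b ∞ with rfl | hb
  · simp [top_div_of_ne_top]
  rcases eq_or_ne a ∞ with rfl | ha
  · simp [top_div_of_ne_top hb]
  lift b to ℝ≥0 using hb
  lift a to ℝ≥0 using ha
  rw [coe_sq_div_add_div_four_eq_ofReal a (coe_ne_zero.mp hb0), ← ofReal_coe_nnreal]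
  gcongr
  have : 0 ≤ ((b : ℝ) - 2 * a) ^ 2 / (4 * b) := by positivity
  linarith [sq_div_add_div_four_sub (a : ℝ) (b := b) (by exact_mod_cast hb0)]

theorem sq_div_add_div_four_eq_iff {a b : ℝ≥0∞} (ha : a ≠ ∞) :
    a ^ 2 / b + b / 4 = a ↔ b = 2 * a := by
  rcases eq_or_ne b 0 with rfl | hb0
  · rcases eq_or_ne a 0 with rfl | ha0
    · simp
    · simp [ENNReal.div_zero (pow_ne_zero 2 ha0), ha0, ha.symm]
  rcases eq_or_ne b ∞ with rfl | hb
  · simp [top_div_of_ne_top, ha.symm, (mul_ne_top ofNat_ne_top ha).symm]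
  lift b to ℝ≥0 using hb
  lift a to ℝ≥0 using ha
  have hb' : (b : ℝ) ≠ 0 := by exact_mod_cast hb0
  have hcast : (b : ℝ≥0∞) = 2 * a ↔ (b : ℝ) = 2 * a := by norm_cast
  rw [hcast, coe_sq_div_add_div_four_eq_ofReal a (coe_ne_zero.mp hb0), ← ofReal_coe_nnreal,
    ofReal_eq_ofReal_iff (by positivity) (by positivity), ← sub_eq_zero,
    sq_div_add_div_four_sub _ hb', _root_.div_eq_zero_iff, mul_eq_zero]
  simp only [pow_eq_zero_iff two_ne_zero, sub_eq_zero, four_ne_zero, hb', or_self, or_false]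

end ENNReal

namespace MeasureTheory

theorem lintegral_eq_lintegral_iff_ae_eq_of_ae_le {α : Type*} [MeasurableSpace α] {μ : Measure α}
    {f g : α → ℝ≥0∞} (hfg : f ≤ᵐ[μ] g) (hf : ∫⁻ x, f x ∂μ ≠ ∞) (hg : AEMeasurable g μ) :
    ∫⁻ x, g x ∂μ = ∫⁻ x, f x ∂μ ↔ f =ᵐ[μ] g :=
  ⟨fun h ↦ ae_eq_of_ae_le_of_lintegral_le hfg hf hg h.le, fun h ↦ (lintegral_congr_ae h).symm⟩

end MeasureTheory

open MeasureTheory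

theorem density_ratio_eq_iff_general
    {X : Type*} [MeasurableSpace X] (μ : Measure X)
    (p q : X → ℝ≥0) (hp : Measurable p) (hq : Measurable q)
    (hp1 : ∫⁻ x, (p x : ℝ≥0∞) ∂μ = 1) (hq1 : ∫⁻ x, (q x : ℝ≥0∞) ∂μ = 1) :
    ∫⁻ x, (q x : ℝ≥0∞) ^ 2 / ((p x : ℝ≥0∞) + (q x : ℝ≥0∞)) ∂μ = 1 / 2 ↔
      p =ᵐ[μ] q := by
  have hsum : Measurable fun x ↦ (p x : ℝ≥0∞) + q x :=
    hp.coe_nnreal_ennreal.add hq.coe_nnreal_ennreal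
  have hmean : ∫⁻ x, ((p x : ℝ≥0∞) + q x) / 4 ∂μ = 1 / 2 := by
    simp_rw [div_eq_mul_inv]
    rw [lintegral_mul_const' _ _ (by simp), lintegral_add_left hp.coe_nnreal_ennreal, hp1, hq1,
      ← div_eq_mul_inv, ← div_eq_mul_inv, ENNReal.div_eq_div_iff] <;> norm_num
  calc ∫⁻ x, (q x : ℝ≥0∞) ^ 2 / ((p x : ℝ≥0∞) + q x) ∂μ = 1 / 2
      ↔ ∫⁻ x, (q x : ℝ≥0∞) ^ 2 / ((p x : ℝ≥0∞) + q x) + ((p x : ℝ≥0∞) + q x) / 4 ∂μ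
          = ∫⁻ x, (q x : ℝ≥0∞) ∂μ := by
        rw [lintegral_add_right' _ (hsum.div_const 4).aemeasurable, hmean, hq1,
          ← ENNReal.add_left_inj (a := 1 / 2) (by simp), ENNReal.add_halves]
    _ ↔ (fun x ↦ (q x : ℝ≥0∞)) =ᵐ[μ]
          fun x ↦ (q x : ℝ≥0∞) ^ 2 / ((p x : ℝ≥0∞) + q x) + ((p x : ℝ≥0∞) + q x) / 4 :=
        lintegral_eq_lintegral_iff_ae_eq_of_ae_le
          (.of_forall fun x ↦ ENNReal.le_sq_div_add_div_four _ _) (by simp [hq1])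
          ((hq.coe_nnreal_ennreal.pow_const 2).div hsum |>.add (hsum.div_const 4)).aemeasurable
    _ ↔ p =ᵐ[μ] q := by
        refine Filter.eventually_congr (.of_forall fun x ↦ ?_)
        rw [eq_comm, ENNReal.sq_div_add_div_four_eq_iff ENNReal.coe_ne_top, two_mul,
          ENNReal.add_left_inj ENNReal.coe_ne_top, ENNReal.coe_inj]

theorem density_ratio_eq_iff
    {X : Type*} [MeasurableSpace X] (μ : Measure X) [SigmaFinite μ]
    (p q : X → ℝ≥0) (hp : Measurable p) (hq : Measurable q)
    (hp1 : ∫⁻ x, (p x : ℝ≥0∞) ∂μ = 1) (hq1 : ∫⁻ x, (q x : ℝ≥0∞) ∂μ = 1) :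
    ∫⁻ x, (q x : ℝ≥0∞) ^ 2 / ((p x : ℝ≥0∞) + (q x : ℝ≥0∞)) ∂μ = 1 / 2 ↔
      p =ᵐ[μ] q :=
  density_ratio_eq_iff_general μ p q hp hq hp1 hq1
end

section
/- Let μ be a σ-finite measure on a measurable space X, let p, q : X → ℝ≥0 be measurable with ∫ p dμ = 1 and ∫ q dμ = 1, and let ε₃, ε₄ be independent standard Gaussian random variables on ℝ. Define l_G(q) = E[(ε₃ − ε₄)²] · ∫ q³/(p + q)² dμ (integrand interpreted as 0 where p + q = 0). Then l_G(q) ≥ 1/2 for all such q, and l_G(q) = 1/2 if and only if q = p μ-almost everywhere. -/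
/-!
Since `ε₃ - ε₄ ~ 𝒩(0, 2)`, the Gaussian factor equals `2`. For the other factor, pointwise
`q³/(p+q)² + p/4 = q/2 + (q-p)²(2q+p)/(4(p+q)²)`; integrating against `∫ p = ∫ q = 1` gives
`∫ q³/(p+q)² = 1/4 + ∫ (q-p)²(2q+p)/(4(p+q)²)`, and the last integrand is nonnegative and vanishes
exactly where `q = p`.
-/

open scoped NNReal ENNReal
open MeasureTheory ProbabilityTheory

namespace ProbabilityTheory

lemma integral_sq_gaussianReal (m : ℝ) (v : ℝ≥0) :
    ∫ x, x ^ 2 ∂gaussianReal m v = m ^ 2 + v := by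
  have h := variance_eq_sub (memLp_id_gaussianReal (μ := m) (v := v) 2)
  simp only [variance_id_gaussianReal, Pi.pow_apply, id_eq, integral_id_gaussianReal] at h
  linarith

variable {Ω : Type*} {mΩ : MeasurableSpace Ω} {P : Measure Ω} {X Y : Ω → ℝ}
  {m₁ m₂ : ℝ} {v₁ v₂ : ℝ≥0}

lemma gaussianReal_sub_gaussianReal_of_indepFun (hXY : IndepFun X Y P)
    (hX : P.map X = gaussianReal m₁ v₁) (hY : P.map Y = gaussianReal m₂ v₂) :
    P.map (X - Y) = gaussianReal (m₁ - m₂) (v₁ + v₂) := by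
  have hY' : HasLaw Y (gaussianReal m₂ v₂) P :=
    ⟨.of_map_ne_zero (by simp [hY, NeZero.ne]), hY⟩
  rw [sub_eq_add_neg, sub_eq_add_neg]
  exact gaussianReal_add_gaussianReal_of_indepFun (hXY.comp measurable_id measurable_neg) hX
    (gaussianReal_neg hY').map_eq

lemma integral_sq_sub_of_indepFun_gaussianReal (hXY : IndepFun X Y P)
    (hX : P.map X = gaussianReal m₁ v₁) (hY : P.map Y = gaussianReal m₂ v₂) :
    ∫ ω, (X ω - Y ω) ^ 2 ∂P = (m₁ - m₂) ^ 2 + v₁ + v₂ := by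
  have hlaw := gaussianReal_sub_gaussianReal_of_indepFun hXY hX hY
  have hmeas : AEMeasurable (X - Y) P := .of_map_ne_zero (by simp [hlaw, NeZero.ne])
  have h := integral_map (f := fun x : ℝ ↦ x ^ 2) hmeas (by fun_prop)
  rw [hlaw, integral_sq_gaussianReal, NNReal.coe_add, ← add_assoc] at h
  exact h.symm

end ProbabilityTheory

/-- `nndist a b ^ 2` stands for `(a - b) ^ 2`, which truncated subtraction on `ℝ≥0` would spoil. -/
noncomputable def generatorLossExcess (a b : ℝ≥0) : ℝ≥0 :=
  nndist a b ^ 2 * (2 * a + b) / (4 * (b + a) ^ 2)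

lemma NNReal.cube_div_sq_add_div_four (a b : ℝ≥0) :
    a ^ 3 / (b + a) ^ 2 + b / 4 = a / 2 + generatorLossExcess a b := by
  rcases eq_zero_or_pos (b + a) with h | h
  · obtain ⟨rfl, rfl⟩ := add_eq_zero.mp h
    simp [generatorLossExcess]
  · apply NNReal.coe_injective
    have h' : (0 : ℝ) < b + a := mod_cast h
    simp only [generatorLossExcess, NNReal.coe_add, NNReal.coe_div, NNReal.coe_pow,
      NNReal.coe_mul, coe_nndist, NNReal.dist_eq, sq_abs]
    push_cast
    field_simp
    ring

lemma generatorLossExcess_eq_zero_iff {a b : ℝ≥0} : generatorLossExcess a b = 0 ↔ a = b := by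
  simp only [generatorLossExcess, div_eq_zero_iff, mul_eq_zero, pow_eq_zero_iff two_ne_zero,
    nndist_eq_zero, add_eq_zero, OfNat.ofNat_ne_zero, false_or]
  constructor
  · rintro ((h | ⟨h, rfl⟩) | ⟨rfl, h⟩) <;> simp_all
  · exact fun h ↦ Or.inl (Or.inl h)

lemma generatorLossExcess_le_add (a b : ℝ≥0) : generatorLossExcess a b ≤ a + b := by
  have hcube : a ^ 3 / (b + a) ^ 2 ≤ a := by
    refine div_le_of_le_mul₀ (by positivity) (by positivity) ?_
    calc a ^ 3 = a * a ^ 2 := by ring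
      _ ≤ a * (b + a) ^ 2 := by gcongr; exact le_add_self
  calc generatorLossExcess a b ≤ a / 2 + generatorLossExcess a b := le_add_self
    _ = a ^ 3 / (b + a) ^ 2 + b / 4 := (NNReal.cube_div_sq_add_div_four a b).symm
    _ ≤ a + b := add_le_add hcube (div_le_self (by positivity) (by norm_num))

lemma ENNReal.coe_cube_div_sq (a b : ℝ≥0) :
    (a : ℝ≥0∞) ^ 3 / ((b : ℝ≥0∞) + a) ^ 2 = ((a ^ 3 / (b + a) ^ 2 : ℝ≥0) : ℝ≥0∞) := by
  rcases eq_or_ne (b + a) 0 with h | h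
  · obtain ⟨rfl, rfl⟩ := add_eq_zero.mp h
    simp
  · rw [ENNReal.coe_div (pow_ne_zero 2 h)]
    push_cast
    rfl

namespace MeasureTheory

variable {X : Type*} [MeasurableSpace X] {μ : Measure X} {p q : X → ℝ≥0}

@[fun_prop]
lemma _root_.Measurable.generatorLossExcess {f g : X → ℝ≥0} (hf : Measurable f)
    (hg : Measurable g) : Measurable fun x ↦ generatorLossExcess (f x) (g x) := by
  unfold _root_.generatorLossExcess
  fun_prop

lemma lintegral_cube_div_sq_eq_quarter_add (hp : Measurable p) (hq : Measurable q)
    (hp1 : ∫⁻ x, (p x : ℝ≥0∞) ∂μ = 1) (hq1 : ∫⁻ x, (q x : ℝ≥0∞) ∂μ = 1) :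
    ∫⁻ x, (q x : ℝ≥0∞) ^ 3 / ((p x : ℝ≥0∞) + (q x : ℝ≥0∞)) ^ 2 ∂μ
      = 4⁻¹ + ∫⁻ x, (generatorLossExcess (q x) (p x) : ℝ≥0∞) ∂μ := by
  have hpt : ∀ x, (q x : ℝ≥0∞) ^ 3 / ((p x : ℝ≥0∞) + (q x : ℝ≥0∞)) ^ 2 + p x * 4⁻¹
      = q x * 2⁻¹ + generatorLossExcess (q x) (p x) := by
    intro x
    rw [ENNReal.coe_cube_div_sq]
    have := congrArg ((↑) : ℝ≥0 → ℝ≥0∞) (NNReal.cube_div_sq_add_div_four (q x) (p x))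
    push_cast [div_eq_mul_inv] at this
    exact this
  have h := lintegral_congr (μ := μ) hpt
  rw [lintegral_add_right _ (by fun_prop), lintegral_add_left (by fun_prop),
    lintegral_mul_const _ (by fun_prop), lintegral_mul_const _ (by fun_prop), hp1, hq1,
    one_mul, one_mul] at h
  have hhalf : (2⁻¹ : ℝ≥0∞) = 4⁻¹ + 4⁻¹ := by
    rw [← ENNReal.add_halves 2⁻¹, ENNReal.div_eq_inv_mul, ← ENNReal.mul_inv (by simp) (by simp)]
    norm_num
  rwa [hhalf, add_right_comm, ENNReal.add_left_inj (by simp)] at h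

lemma lintegral_generatorLossExcess_ne_top (hq : Measurable q)
    (hp1 : ∫⁻ x, (p x : ℝ≥0∞) ∂μ = 1) (hq1 : ∫⁻ x, (q x : ℝ≥0∞) ∂μ = 1) :
    ∫⁻ x, (generatorLossExcess (q x) (p x) : ℝ≥0∞) ∂μ ≠ ∞ := by
  refine ne_top_of_le_ne_top ?_
    (lintegral_mono fun x ↦ ENNReal.coe_le_coe.2 (generatorLossExcess_le_add (q x) (p x)))
  simp only [ENNReal.coe_add]
  rw [lintegral_add_left hq.coe_nnreal_ennreal, hq1, hp1]
  simp

lemma lintegral_generatorLossExcess_eq_zero_iff (hp : Measurable p) (hq : Measurable q) :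
    ∫⁻ x, (generatorLossExcess (q x) (p x) : ℝ≥0∞) ∂μ = 0 ↔ q =ᵐ[μ] p := by
  rw [lintegral_eq_zero_iff (by fun_prop)]
  simp [Filter.EventuallyEq, generatorLossExcess_eq_zero_iff]

end MeasureTheory

theorem generator_loss_global_min_general
    {X : Type*} [MeasurableSpace X] (μ : Measure X)
    (p q : X → ℝ≥0) (hp : Measurable p) (hq : Measurable q)
    (hp1 : ∫⁻ x, (p x : ℝ≥0∞) ∂μ = 1) (hq1 : ∫⁻ x, (q x : ℝ≥0∞) ∂μ = 1)
    {Ω : Type*} [MeasurableSpace Ω] (ν : Measure Ω)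
    (ε₃ ε₄ : Ω → ℝ)
    (h₃ : Measure.map ε₃ ν = gaussianReal 0 1)
    (h₄ : Measure.map ε₄ ν = gaussianReal 0 1)
    (hindep : IndepFun ε₃ ε₄ ν) :
    (∫ ω, (ε₃ ω - ε₄ ω) ^ 2 ∂ν) *
        (∫⁻ x, (q x : ℝ≥0∞) ^ 3 / ((p x : ℝ≥0∞) + (q x : ℝ≥0∞)) ^ 2 ∂μ).toReal
      ≥ 1 / 2 ∧
    ((∫ ω, (ε₃ ω - ε₄ ω) ^ 2 ∂ν) *
        (∫⁻ x, (q x : ℝ≥0∞) ^ 3 / ((p x : ℝ≥0∞) + (q x : ℝ≥0∞)) ^ 2 ∂μ).toReal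
      = 1 / 2 ↔ q =ᵐ[μ] p) := by
  have hgauss : ∫ ω, (ε₃ ω - ε₄ ω) ^ 2 ∂ν = 2 := by
    rw [integral_sq_sub_of_indepFun_gaussianReal hindep h₃ h₄]
    norm_num
  set J := ∫⁻ x, (generatorLossExcess (q x) (p x) : ℝ≥0∞) ∂μ
  have hJ : J ≠ ∞ := lintegral_generatorLossExcess_ne_top hq hp1 hq1
  have hJ_toReal : J.toReal = 0 ↔ J = 0 := by simp [ENNReal.toReal_eq_zero_iff, hJ]
  rw [hgauss, lintegral_cube_div_sq_eq_quarter_add hp hq hp1 hq1,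
    ENNReal.toReal_add (by simp) hJ, ← lintegral_generatorLossExcess_eq_zero_iff hp hq,
    ← hJ_toReal, ENNReal.toReal_inv, ENNReal.toReal_ofNat]
  have hJ₀ : 0 ≤ J.toReal := ENNReal.toReal_nonneg
  exact ⟨by linarith, ⟨fun h ↦ by linarith, fun h ↦ by rw [h]; norm_num⟩⟩

theorem generator_loss_global_min
    {X : Type*} [MeasurableSpace X] (μ : Measure X) [SigmaFinite μ]
    (p q : X → ℝ≥0) (hp : Measurable p) (hq : Measurable q)
    (hp1 : ∫⁻ x, (p x : ℝ≥0∞) ∂μ = 1) (hq1 : ∫⁻ x, (q x : ℝ≥0∞) ∂μ = 1)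
    {Ω : Type*} [MeasurableSpace Ω] (ν : Measure Ω) [IsProbabilityMeasure ν]
    (ε₃ ε₄ : Ω → ℝ) (hm₃ : Measurable ε₃) (hm₄ : Measurable ε₄)
    (h₃ : Measure.map ε₃ ν = gaussianReal 0 1)
    (h₄ : Measure.map ε₄ ν = gaussianReal 0 1)
    (hindep : IndepFun ε₃ ε₄ ν) :
    (∫ ω, (ε₃ ω - ε₄ ω) ^ 2 ∂ν) *
        (∫⁻ x, (q x : ℝ≥0∞) ^ 3 / ((p x : ℝ≥0∞) + (q x : ℝ≥0∞)) ^ 2 ∂μ).toReal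
      ≥ 1 / 2 ∧
    ((∫ ω, (ε₃ ω - ε₄ ω) ^ 2 ∂ν) *
        (∫⁻ x, (q x : ℝ≥0∞) ^ 3 / ((p x : ℝ≥0∞) + (q x : ℝ≥0∞)) ^ 2 ∂μ).toReal
      = 1 / 2 ↔ q =ᵐ[μ] p) :=
  generator_loss_global_min_general μ p q hp hq hp1 hq1 ν ε₃ ε₄ h₃ h₄ hindep
end

section
/- Let μ be a σ-finite measure on a measurable space X, and let p, q : X → ℝ≥0 be measurable with ∫ p dμ = 1 and ∫ q dμ = 1. Then (∫ q²/(p + q) dμ)² ≥ 1/4, and combining with the Jensen step, ∫ q · (q/(p + q))² dμ ≥ 1/4 (all ratios interpreted as 0 where p + q = 0). -/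
/-!
Pointwise, `q ≤ q² / (p + q) + (p + q) / 4` (AM-GM), so integrating against two probability
densities gives `∫ q² / (p + q) ≥ 1 - 2 / 4 = 1 / 2`. Writing `q² / (p + q) = q · r` with
`r = q / (p + q)`, Cauchy–Schwarz with weight `q` gives
`(∫ q r)² ≤ (∫ q) (∫ q r²) = ∫ q r²`.
-/

open scoped NNReal ENNReal
open MeasureTheory

theorem ENNReal.le_sq_div_add_add_div_four (a b : ℝ≥0∞) :
    b ≤ b ^ 2 / (a + b) + (a + b) / 4 := by
  obtain rfl | hb := eq_or_ne b 0
  · exact zero_le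
  obtain hab | hab := eq_or_ne (a + b) ⊤
  · simp [hab, ENNReal.top_div]
  lift a to ℝ≥0 using (ENNReal.add_ne_top.mp hab).1
  lift b to ℝ≥0 using (ENNReal.add_ne_top.mp hab).2
  have hpos : (0 : ℝ) < a + b := by
    have : b ≠ 0 := by exact_mod_cast hb
    positivity
  rw [← ENNReal.coe_add, ← ENNReal.coe_pow, ← ENNReal.coe_div (by exact_mod_cast hpos.ne'),
    ← ENNReal.coe_ofNat, ← ENNReal.coe_div (by norm_num), ← ENNReal.coe_add,
    ENNReal.coe_le_coe, ← NNReal.coe_le_coe]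
  push_cast
  rw [div_add_div _ _ hpos.ne' four_ne_zero, le_div_iff₀ (by positivity)]
  nlinarith [sq_nonneg (a - b : ℝ)]

section

variable {X : Type*} [MeasurableSpace X] {μ : Measure X}

theorem half_le_lintegral_sq_div_add {f g : X → ℝ≥0∞} (hf : AEMeasurable f μ)
    (hg : AEMeasurable g μ) (hf1 : ∫⁻ x, f x ∂μ = 1) (hg1 : ∫⁻ x, g x ∂μ = 1) :
    1 / 2 ≤ ∫⁻ x, g x ^ 2 / (f x + g x) ∂μ := by
  set I := ∫⁻ x, g x ^ 2 / (f x + g x) ∂μ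
  have h : 1 ≤ I + 1 / 2 :=
    calc 1 = ∫⁻ x, g x ∂μ := hg1.symm
      _ ≤ ∫⁻ x, (g x ^ 2 / (f x + g x) + (f x + g x) / 4) ∂μ :=
        lintegral_mono fun x => ENNReal.le_sq_div_add_add_div_four (f x) (g x)
      _ = I + (∫⁻ x, f x ∂μ + ∫⁻ x, g x ∂μ) / 4 := by
        simp_rw [div_eq_mul_inv (_ + _) (4 : ℝ≥0∞)]
        rw [lintegral_add_right' _ (g := fun x => (f x + g x) * 4⁻¹)
          ((hf.add hg).mul_const _), lintegral_mul_const' _ _ (by simp), lintegral_add_left' hf]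
      _ = I + 1 / 2 := by
        have : (1 + 1 : ℝ≥0∞) / 4 = 1 / 2 := by rw [ENNReal.div_eq_div_iff] <;> norm_num
        rw [hf1, hg1, this]
  exact (ENNReal.add_le_add_iff_right (a := 1 / 2) (by simp)).mp (by rwa [ENNReal.add_halves])

theorem sq_lintegral_mul_le {w g : X → ℝ≥0∞} (hw : AEMeasurable w μ)
    (hg : AEMeasurable g μ) :
    (∫⁻ x, w x * g x ∂μ) ^ 2 ≤ (∫⁻ x, w x ∂μ) * ∫⁻ x, w x * g x ^ 2 ∂μ := by
  set s : X → ℝ≥0∞ := fun x => w x ^ (2⁻¹ : ℝ)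
  have hs (x : X) : s x ^ (2 : ℝ) = w x := ENNReal.rpow_inv_rpow two_ne_zero (w x)
  have hsq (A : ℝ≥0∞) : (A ^ (1 / 2 : ℝ)) ^ 2 = A := by
    rw [← ENNReal.rpow_two, ← ENNReal.rpow_mul]; norm_num
  have holder := ENNReal.lintegral_mul_le_Lp_mul_Lq μ Real.HolderConjugate.two_two
    (hw.pow_const (2⁻¹ : ℝ)) ((hw.pow_const (2⁻¹ : ℝ)).mul hg)
  calc (∫⁻ x, w x * g x ∂μ) ^ 2 = (∫⁻ x, (s * fun x => s x * g x) x ∂μ) ^ 2 := by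
        congr 1
        refine lintegral_congr fun x => ?_
        simp only [Pi.mul_apply, ← mul_assoc, ← sq, ← ENNReal.rpow_two, hs]
    _ ≤ ((∫⁻ x, s x ^ (2 : ℝ) ∂μ) ^ (1 / 2 : ℝ) *
          (∫⁻ x, (s x * g x) ^ (2 : ℝ) ∂μ) ^ (1 / 2 : ℝ)) ^ 2 :=
        pow_le_pow_left₀ zero_le holder 2
    _ = (∫⁻ x, w x ∂μ) * ∫⁻ x, w x * g x ^ 2 ∂μ := by
        simp only [mul_pow, hsq, ENNReal.mul_rpow_of_nonneg _ _ zero_le_two, hs, ENNReal.rpow_two]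

end

theorem chained_lower_bound_general
    {X : Type*} [MeasurableSpace X] (μ : Measure X)
    (p q : X → ℝ≥0) (hp : Measurable p) (hq : Measurable q)
    (hp1 : ∫⁻ x, (p x : ℝ≥0∞) ∂μ = 1) (hq1 : ∫⁻ x, (q x : ℝ≥0∞) ∂μ = 1) :
    ((∫⁻ x, (q x : ℝ≥0∞) ^ 2 / ((p x : ℝ≥0∞) + (q x : ℝ≥0∞)) ∂μ) ^ 2 ≥ 1 / 4) ∧
    (∫⁻ x, (q x : ℝ≥0∞) * ((q x : ℝ≥0∞) / ((p x : ℝ≥0∞) + (q x : ℝ≥0∞))) ^ 2 ∂μ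
      ≥ 1 / 4) := by
  have mp := hp.coe_nnreal_ennreal.aemeasurable (μ := μ)
  have mq := hq.coe_nnreal_ennreal.aemeasurable (μ := μ)
  have half_le := half_le_lintegral_sq_div_add mp mq hp1 hq1
  have cauchy_schwarz :
      (∫⁻ x, (q x : ℝ≥0∞) ^ 2 / (p x + q x) ∂μ) ^ 2 ≤
        ∫⁻ x, (q x : ℝ≥0∞) * ((q x : ℝ≥0∞) / (p x + q x)) ^ 2 ∂μ := by
    simpa only [hq1, one_mul, sq, mul_div_assoc] using
      sq_lintegral_mul_le (g := fun x => (q x : ℝ≥0∞) / (p x + q x)) mq (mq.div (mp.add mq))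
  have quarter_le : 1 / 4 ≤ (∫⁻ x, (q x : ℝ≥0∞) ^ 2 / (p x + q x) ∂μ) ^ 2 :=
    calc (1 / 4 : ℝ≥0∞) = (1 / 2) ^ 2 := by
          rw [one_div, one_div, ← ENNReal.inv_pow]; norm_num
      _ ≤ _ := pow_le_pow_left₀ zero_le half_le 2
  exact ⟨quarter_le, quarter_le.trans cauchy_schwarz⟩

theorem chained_lower_bound
    {X : Type*} [MeasurableSpace X] (μ : Measure X) [SigmaFinite μ]
    (p q : X → ℝ≥0) (hp : Measurable p) (hq : Measurable q)
    (hp1 : ∫⁻ x, (p x : ℝ≥0∞) ∂μ = 1) (hq1 : ∫⁻ x, (q x : ℝ≥0∞) ∂μ = 1) :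
    ((∫⁻ x, (q x : ℝ≥0∞) ^ 2 / ((p x : ℝ≥0∞) + (q x : ℝ≥0∞)) ∂μ) ^ 2 ≥ 1 / 4) ∧
    (∫⁻ x, (q x : ℝ≥0∞) * ((q x : ℝ≥0∞) / ((p x : ℝ≥0∞) + (q x : ℝ≥0∞))) ^ 2 ∂μ
      ≥ 1 / 4) :=
  chained_lower_bound_general μ p q hp hq hp1 hq1
end
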